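/- For all real numbers a and b: ∫_ℝ φ(x) Φ(a + b·x) dx = Φ(a/√(1 + b²)). -/

import Mathlib

/-!
Writing `Φ(a + b x) = ∫_{s < a} φ(s + b x) ds` and exchanging the integrals (legitimate since the
shear `(x, s) ↦ (x, s + b x)` preserves Lebesgue measure on `ℝ²`), the inner integral is
`∫ φ(x) φ(s + b x) dx`. Completing the square,
`x² + (s + b x)² = (c x + b s / c)² + (s / c)²` with `c = √(1 + b²)`, so this inner integral is
`c⁻¹ φ(s / c)`, the density of `N(0, c²)`, whose integral over `s < a` is `Φ(a / c)`.
-/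

open MeasureTheory

/-- The standard normal density. -/
noncomputable def stdNormalPDF (x : ℝ) : ℝ :=
  (Real.sqrt (2 * Real.pi))⁻¹ * Real.exp (-x ^ 2 / 2)

/-- The standard normal cumulative distribution function. -/
noncomputable def stdNormalCDF (x : ℝ) : ℝ :=
  ∫ t in Set.Iio x, stdNormalPDF t

open Set ProbabilityTheory

lemma stdNormalPDF_eq_gaussianPDFReal : stdNormalPDF = gaussianPDFReal 0 1 := by
  ext x
  simp [stdNormalPDF, gaussianPDFReal]

lemma integrable_stdNormalPDF : Integrable stdNormalPDF :=
  stdNormalPDF_eq_gaussianPDFReal ▸ integrable_gaussianPDFReal 0 1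

lemma integral_stdNormalPDF : ∫ x, stdNormalPDF x = 1 :=
  stdNormalPDF_eq_gaussianPDFReal ▸ integral_gaussianPDFReal_eq_one 0 one_ne_zero

/-- For `c = 0` both sides are `0`: the integrand is then a nonzero constant, not integrable. -/
lemma integral_stdNormalPDF_mul_add (c d : ℝ) : ∫ x, stdNormalPDF (c * x + d) = |c|⁻¹ := by
  rw [Measure.integral_comp_mul_left (fun y => stdNormalPDF (y + d)),
    integral_add_right_eq_self stdNormalPDF d, integral_stdNormalPDF, abs_inv, smul_eq_mul, mul_one]

lemma stdNormalPDF_mul_stdNormalPDF_add_mul (b s x : ℝ) :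
    stdNormalPDF x * stdNormalPDF (s + b * x) =
      stdNormalPDF (s / √(1 + b ^ 2)) *
        stdNormalPDF (√(1 + b ^ 2) * x + b * s / √(1 + b ^ 2)) := by
  have hc : 0 < √(1 + b ^ 2) := by positivity
  have hc2 : √(1 + b ^ 2) ^ 2 = 1 + b ^ 2 := Real.sq_sqrt (by positivity)
  simp only [stdNormalPDF]
  rw [mul_mul_mul_comm, mul_mul_mul_comm _ (Real.exp _), ← Real.exp_add, ← Real.exp_add]
  congr 2
  field_simp
  rw [hc2]
  ring

lemma integral_stdNormalPDF_mul_stdNormalPDF_add_mul (b s : ℝ) :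
    ∫ x, stdNormalPDF x * stdNormalPDF (s + b * x) =
      (√(1 + b ^ 2))⁻¹ * stdNormalPDF (s / √(1 + b ^ 2)) := by
  have hc : 0 < √(1 + b ^ 2) := by positivity
  simp_rw [stdNormalPDF_mul_stdNormalPDF_add_mul b s]
  rw [integral_const_mul, integral_stdNormalPDF_mul_add, abs_of_pos hc, mul_comm]

/-- Fubini after the measure-preserving shear `(x, s) ↦ (x, s + b x)`. -/
lemma integral_mul_setIntegral_comp_add_mul {f g : ℝ → ℝ} (hf : Integrable f) (hg : Integrable g)
    (b : ℝ) (S : Set ℝ) :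
    ∫ x, f x * ∫ s in S, g (s + b * x) = ∫ s in S, ∫ x, f x * g (s + b * x) := by
  have hshear : MeasurePreserving (fun p : ℝ × ℝ => (p.1, p.2 + b * p.1))
      (volume.prod volume) (volume.prod volume) :=
    (MeasurePreserving.id volume).skew_product (by fun_prop)
      (.of_forall fun x => (measurePreserving_add_right volume (b * x)).map_eq)
  have hprod : Integrable (fun p : ℝ × ℝ => f p.1 * g p.2) (volume.prod volume) :=
    hf.mul_prod hg
  have hsheared : Integrable (fun p : ℝ × ℝ => f p.1 * g (p.2 + b * p.1))
      (volume.prod (volume.restrict S)) := by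
    have hrestrict : (volume : Measure ℝ).prod (volume.restrict S) =
        (volume.prod volume).restrict (univ ×ˢ S) := by
      rw [← Measure.prod_restrict, Measure.restrict_univ]
    rw [hrestrict]
    exact ((hshear.integrable_comp hprod.aestronglyMeasurable).mpr hprod).restrict
  simp_rw [← integral_const_mul]
  exact integral_integral_swap hsheared

lemma setIntegral_Iio_comp_add_right {E : Type*} [NormedAddCommGroup E] [NormedSpace ℝ E]
    (g : ℝ → E) (a c : ℝ) : ∫ s in Iio a, g (s + c) = ∫ t in Iio (a + c), g t := by
  have h := (measurePreserving_add_right volume c).setIntegral_preimage_emb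
    (measurableEmbedding_addRight c) g (Iio (a + c))
  rwa [preimage_add_const_Iio, add_sub_cancel_right] at h

lemma setIntegral_Iio_comp_div {E : Type*} [NormedAddCommGroup E] [NormedSpace ℝ E]
    (g : ℝ → E) (a : ℝ) {c : ℝ} (hc : 0 < c) :
    ∫ s in Iio a, g (s / c) = c • ∫ t in Iio (a / c), g t := by
  have h := Measure.setIntegral_comp_smul_of_pos volume g (Iio a) (inv_pos.mpr hc)
  rw [LinearOrderedField.smul_Iio (inv_pos.mpr hc), Module.finrank_self, pow_one, inv_inv] at h
  simpa only [smul_eq_mul, ← div_eq_inv_mul] using h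

/-- Azzalini's Lemma 2.2: `∫ φ(x) Φ(a + b·x) dx = Φ(a/√(1 + b²))`. -/
theorem azzalini_lemma (a b : ℝ) :
    (∫ x : ℝ, stdNormalPDF x * stdNormalCDF (a + b * x)) =
      stdNormalCDF (a / Real.sqrt (1 + b ^ 2)) := by
  have hc : 0 < √(1 + b ^ 2) := by positivity
  calc ∫ x, stdNormalPDF x * stdNormalCDF (a + b * x)
      = ∫ x, stdNormalPDF x * ∫ s in Iio a, stdNormalPDF (s + b * x) := by
        simp_rw [setIntegral_Iio_comp_add_right, stdNormalCDF]
    _ = ∫ s in Iio a, ∫ x, stdNormalPDF x * stdNormalPDF (s + b * x) :=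
        integral_mul_setIntegral_comp_add_mul integrable_stdNormalPDF integrable_stdNormalPDF b _
    _ = ∫ s in Iio a, (√(1 + b ^ 2))⁻¹ * stdNormalPDF (s / √(1 + b ^ 2)) := by
        simp_rw [integral_stdNormalPDF_mul_stdNormalPDF_add_mul]
    _ = stdNormalCDF (a / √(1 + b ^ 2)) := by
        rw [integral_const_mul, setIntegral_Iio_comp_div _ _ hc, smul_eq_mul,
          inv_mul_cancel_left₀ hc.ne', stdNormalCDF]
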